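/- Let μ be a Borel probability measure on ℝ. Then (1/|s|)·∫_ℝ (1 − cos(λs)) dμ(λ) → 0 as s → 0 if and only if Λ·μ((−Λ,Λ)ᶜ) → 0 as Λ → +∞. -/

import Mathlib

/-!
Write `φ s = ∫ (1 - cos (λ s)) dμ(λ)` and `τ Λ = μ {λ | Λ ≤ |λ|}`.

If `φ s = o(s)`, the truncation inequality
`τ r ≤ (r / 2) ‖∫_{-2/r}^{2/r} (1 - charFun μ t) dt‖` gives `r τ r → 0`: the integral of
`1 - charFun μ` over a symmetric interval is real, and its real part is `∫ φ`, which is `O(r⁻²)`.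

Conversely, `1 - cos (λ s) ≤ 2 s² min(|λ|, |s|⁻¹)²`, and by Fubini
`∫ min(|λ|, R)² dμ = ∫_0^R 2 t τ t dt`, which is `o(R)` when `t τ t → 0`.
Taking `R = |s|⁻¹` gives `φ s = o(s)`.
-/

open MeasureTheory Filter Topology Set
open scoped Interval

theorem compl_Ioo_neg_eq_setOf_le_abs (Λ : ℝ) : (Ioo (-Λ) Λ)ᶜ = {x | Λ ≤ |x|} := by
  ext x
  simp [← abs_lt]

theorem tendsto_inv_abs_mul_iff_isLittleO (f : ℝ → ℝ) :
    Tendsto (fun s => 1 / |s| * f s) (𝓝[≠] 0) (𝓝 0) ↔ f =o[𝓝[≠] 0] id := by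
  rw [Asymptotics.isLittleO_iff_tendsto' (l := 𝓝[≠] 0) (g := id)
      (eventually_mem_nhdsWithin.mono fun s hs h0 => absurd h0 hs),
    tendsto_zero_iff_norm_tendsto_zero,
    tendsto_zero_iff_norm_tendsto_zero (f := fun s => f s / id s)]
  simp [div_eq_inv_mul]

theorem integrable_cos_mul_const (μ : Measure ℝ) [IsFiniteMeasure μ] (t : ℝ) :
    Integrable (fun x => Real.cos (x * t)) μ :=
  (integrable_const (1 : ℝ)).mono' (by fun_prop) (ae_of_all _ fun x => by
    simpa using Real.abs_cos_le_one (x * t))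

theorem re_charFun_eq_integral_cos (μ : Measure ℝ) [IsFiniteMeasure μ] (t : ℝ) :
    (charFun μ t).re = ∫ x, Real.cos (x * t) ∂μ := by
  rw [charFun_apply_real, ← RCLike.re_to_complex, ← integral_re]
  · congr with x
    rw [RCLike.re_to_complex, ← Complex.ofReal_mul, Complex.exp_ofReal_mul_I_re, mul_comm]
  · exact (integrable_const (1 : ℝ)).mono' (by fun_prop) (ae_of_all _ fun x => by
      rw [← Complex.ofReal_mul, Complex.norm_exp_ofReal_mul_I])

theorem intervalIntegral_one_sub_charFun_eq_ofReal (μ : Measure ℝ) [IsProbabilityMeasure μ] {a : ℝ}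
    (ha : 0 < a) :
    ∫ t in -a..a, (1 - charFun μ t) =
      ↑(∫ t in -a..a, ∫ x, (1 - Real.cos (x * t)) ∂μ) := by
  have h_int : IntervalIntegrable (fun t => 1 - charFun μ t) volume (-a) a :=
    intervalIntegrable_const.sub intervalIntegrable_charFun
  apply Complex.ext
  · rw [← RCLike.re_to_complex, ← intervalIntegral.intervalIntegral_re h_int,
      Complex.ofReal_re]
    congr with t
    rw [RCLike.re_to_complex, Complex.sub_re, Complex.one_re, re_charFun_eq_integral_cos,
      integral_sub (integrable_const 1) (integrable_cos_mul_const μ t), integral_const,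
      probReal_univ, smul_eq_mul, one_mul]
  · rw [intervalIntegral.integral_sub intervalIntegrable_const intervalIntegrable_charFun,
      integral_charFun_Icc ha]
    simp

theorem measureReal_abs_gt_le_of_integral_one_sub_cos_le (μ : Measure ℝ)
    [IsProbabilityMeasure μ] {ε r : ℝ} (hr : 0 < r)
    (h : ∀ t, |t| ≤ 2 * r⁻¹ → ∫ x, (1 - Real.cos (x * t)) ∂μ ≤ ε * |t|) :
    μ.real {x | r < |x|} ≤ 4 * ε / r := by
  have h_nonneg (t : ℝ) : 0 ≤ ∫ x, (1 - Real.cos (x * t)) ∂μ :=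
    integral_nonneg fun x => sub_nonneg.2 (Real.cos_le_one _)
  have hε : 0 ≤ ε := by
    have := (h_nonneg _).trans (h (2 * r⁻¹) (abs_of_pos (by positivity)).le)
    exact nonneg_of_mul_nonneg_left this (by positivity)
  have h_bound : ∀ t ∈ Ι (-2 * r⁻¹) (2 * r⁻¹),
      ‖∫ x, (1 - Real.cos (x * t)) ∂μ‖ ≤ ε * (2 * r⁻¹) := by
    intro t ht
    rw [uIoc_of_le (by linarith [inv_pos.2 hr]), neg_mul] at ht
    have ht' : |t| ≤ 2 * r⁻¹ := abs_le.2 ⟨ht.1.le, ht.2⟩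
    rw [Real.norm_of_nonneg (h_nonneg t)]
    exact (h t ht').trans (mul_le_mul_of_nonneg_left ht' hε)
  calc μ.real {x | r < |x|}
      ≤ 2⁻¹ * r * ‖∫ t in (-2 * r⁻¹)..(2 * r⁻¹), 1 - charFun μ t‖ :=
        measureReal_abs_gt_le_integral_charFun hr
    _ = 2⁻¹ * r * ‖∫ t in (-2 * r⁻¹)..(2 * r⁻¹), ∫ x, (1 - Real.cos (x * t)) ∂μ‖ := by
        rw [neg_mul, intervalIntegral_one_sub_charFun_eq_ofReal μ (by positivity),
          Complex.norm_real]
    _ ≤ 2⁻¹ * r * (ε * (2 * r⁻¹) * |2 * r⁻¹ - -2 * r⁻¹|) := by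
        gcongr
        exact intervalIntegral.norm_integral_le_of_norm_le_const h_bound
    _ = 4 * ε / r := by
        rw [show 2 * r⁻¹ - -2 * r⁻¹ = 4 * r⁻¹ by ring, abs_of_pos (by positivity)]
        field_simp

theorem tendsto_mul_tail_of_isLittleO (μ : Measure ℝ) [IsProbabilityMeasure μ]
    (h : (fun s => ∫ x, (1 - Real.cos (x * s)) ∂μ) =o[𝓝[≠] 0] id) :
    Tendsto (fun Λ : ℝ => Λ * μ.real {x | Λ ≤ |x|}) atTop (𝓝 0) := by
  rw [Metric.tendsto_atTop]
  intro ε hε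
  obtain ⟨δ, hδ, hφ⟩ := Metric.eventually_nhds_iff.1
    (eventually_nhdsWithin_iff.1 (h.bound (c := ε / 16) (by positivity)))
  refine ⟨4 / δ + 1, fun Λ hΛ => ?_⟩
  have hΛ : 0 < Λ := by linarith [div_pos four_pos hδ]
  have hδΛ : 2 * (Λ / 2)⁻¹ < δ := by
    rw [show 2 * (Λ / 2)⁻¹ = 4 / Λ by field_simp; ring, div_lt_comm₀ hΛ hδ]
    linarith
  have h_tail :=
    measureReal_abs_gt_le_of_integral_one_sub_cos_le μ (half_pos hΛ) (ε := ε / 16) fun t ht => by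
      rcases eq_or_ne t 0 with rfl | ht0
      · simp
      · simpa [abs_of_nonneg (integral_nonneg fun x => sub_nonneg.2 (Real.cos_le_one _))] using
          hφ (by rw [Real.dist_eq, sub_zero]; linarith) ht0
  have h_mono : μ.real {x | Λ ≤ |x|} ≤ μ.real {x | Λ / 2 < |x|} :=
    measureReal_mono fun x hx => (half_lt_self hΛ).trans_le hx
  rw [Real.dist_eq, sub_zero, abs_of_nonneg (by positivity)]
  calc Λ * μ.real {x | Λ ≤ |x|} ≤ Λ * (4 * (ε / 16) / (Λ / 2)) := by
        gcongr
        exact h_mono.trans h_tail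
    _ < ε := by
        field_simp
        linarith

theorem integral_min_sq_eq_integral_tail {α : Type*} [MeasurableSpace α] (μ : Measure α)
    [IsFiniteMeasure μ] {f : α → ℝ} (hf : Measurable f) (hf0 : 0 ≤ f) {R : ℝ} (hR : 0 ≤ R) :
    ∫ x, min (f x) R ^ 2 ∂μ = ∫ t in Ioc 0 R, 2 * t * μ.real {x | t ≤ f x} := by
  set F : α → ℝ → ℝ := fun x t => if t ≤ f x then 2 * t else 0
  have h_inner_t (x : α) : ∫ t in Ioc 0 R, F x t = min (f x) R ^ 2 := by
    have : (F x) = (Iic (f x)).indicator (fun t => 2 * t) := by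
      ext t; simp [F, Set.indicator_apply]
    rw [this, setIntegral_indicator measurableSet_Iic, Ioc_inter_Iic,
      ← intervalIntegral.integral_of_le (le_min hR (hf0 x)), intervalIntegral.integral_const_mul,
      integral_id, min_comm]
    ring
  have h_inner_x (t : ℝ) : ∫ x, F x t ∂μ = 2 * t * μ.real {x | t ≤ f x} := by
    have : (fun x => F x t) = {x | t ≤ f x}.indicator (fun _ => 2 * t) := by
      ext x; simp [F, Set.indicator_apply]
    rw [this, integral_indicator_const _ (measurableSet_le measurable_const hf), smul_eq_mul,
      mul_comm]
  have h_int : Integrable (Function.uncurry F) (μ.prod (volume.restrict (Ioc 0 R))) := by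
    refine (integrable_const (2 * R)).mono' ?_ ?_
    · exact (Measurable.ite (measurableSet_le measurable_snd (hf.comp measurable_fst))
        (measurable_const.mul measurable_snd) measurable_const).aestronglyMeasurable
    · filter_upwards [Measure.quasiMeasurePreserving_snd.ae (ae_restrict_mem measurableSet_Ioc)]
        with p hp
      simp only [Function.uncurry, F]
      split_ifs <;> simp [abs_of_pos hp.1, hp.2, hR]
  calc ∫ x, min (f x) R ^ 2 ∂μ = ∫ x, (∫ t in Ioc 0 R, F x t) ∂μ := by simp_rw [h_inner_t]
    _ = ∫ t in Ioc 0 R, ∫ x, F x t ∂μ := integral_integral_swap h_int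
    _ = ∫ t in Ioc 0 R, 2 * t * μ.real {x | t ≤ f x} := by simp_rw [h_inner_x]

theorem integral_min_sq_le_of_tail_le {α : Type*} [MeasurableSpace α] (μ : Measure α)
    [IsProbabilityMeasure μ] {f : α → ℝ} (hf : Measurable f) (hf0 : 0 ≤ f) {ε T R : ℝ}
    (hT : 0 ≤ T) (hTR : T ≤ R) (h : ∀ t ≥ T, t * μ.real {x | t ≤ f x} ≤ ε) :
    ∫ x, min (f x) R ^ 2 ∂μ ≤ T ^ 2 + 2 * ε * R := by
  set τ : ℝ → ℝ := fun t => μ.real {x | t ≤ f x}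
  have hτ_anti : Antitone τ := fun s t hst => measureReal_mono fun x hx => hst.trans hx
  have h_int (a b : ℝ) : IntegrableOn (fun t => 2 * t * τ t) (Ioc a b) :=
    (hτ_anti.intervalIntegrable.continuousOn_mul (continuous_const_mul (2 : ℝ)).continuousOn).1
  have hε : 0 ≤ ε := (mul_nonneg hT measureReal_nonneg).trans (h T le_rfl)
  have h_low : ∫ t in Ioc 0 T, 2 * t * τ t ≤ T ^ 2 :=
    calc ∫ t in Ioc 0 T, 2 * t * τ t ≤ ∫ t in Ioc 0 T, 2 * t := by
          refine setIntegral_mono_on (h_int 0 T) (continuous_const_mul (2 : ℝ)).integrableOn_Ioc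
            measurableSet_Ioc fun t ht => ?_
          exact mul_le_of_le_one_right (by linarith [ht.1]) measureReal_le_one
      _ = T ^ 2 := by
          rw [← intervalIntegral.integral_of_le hT, intervalIntegral.integral_const_mul,
            integral_id]
          ring
  have h_high : ∫ t in Ioc T R, 2 * t * τ t ≤ 2 * ε * R :=
    calc ∫ t in Ioc T R, 2 * t * τ t ≤ ∫ t in Ioc T R, 2 * ε := by
          refine setIntegral_mono_on (h_int T R) (integrableOn_const measure_Ioc_lt_top.ne)
            measurableSet_Ioc fun t ht => ?_
          linarith [h t ht.1.le]
      _ ≤ 2 * ε * R := by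
          rw [setIntegral_const, Real.volume_real_Ioc_of_le hTR, smul_eq_mul]
          nlinarith
  rw [integral_min_sq_eq_integral_tail μ hf hf0 (hT.trans hTR), ← Ioc_union_Ioc_eq_Ioc hT hTR,
    setIntegral_union (Ioc_disjoint_Ioc_of_le le_rfl) measurableSet_Ioc (h_int 0 T) (h_int T R)]
  linarith

theorem isLittleO_integral_min_sq {α : Type*} [MeasurableSpace α] (μ : Measure α)
    [IsProbabilityMeasure μ] {f : α → ℝ} (hf : Measurable f) (hf0 : 0 ≤ f)
    (h : Tendsto (fun t => t * μ.real {x | t ≤ f x}) atTop (𝓝 0)) :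
    (fun R => ∫ x, min (f x) R ^ 2 ∂μ) =o[atTop] id := by
  refine Asymptotics.IsLittleO.of_bound fun c hc => ?_
  obtain ⟨T, hT⟩ := eventually_atTop.1 (h.eventually (ge_mem_nhds (div_pos hc four_pos)))
  set T₀ := max T 0
  filter_upwards [eventually_ge_atTop T₀, eventually_ge_atTop (2 * T₀ ^ 2 / c)] with R hR hRc
  have hR0 : 0 ≤ R := (le_max_right T 0).trans hR
  have h_bound := integral_min_sq_le_of_tail_le μ hf hf0 (le_max_right T 0) hR
    fun t ht => hT t ((le_max_left T 0).trans ht)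
  rw [div_le_iff₀ hc] at hRc
  rw [Real.norm_of_nonneg (integral_nonneg fun x => sq_nonneg _), id, Real.norm_of_nonneg hR0]
  nlinarith

theorem one_sub_cos_mul_le (x s : ℝ) : 1 - Real.cos (x * s) ≤ 2 * s ^ 2 * min |x| |s|⁻¹ ^ 2 := by
  rcases eq_or_ne s 0 with rfl | hs
  · simp
  rcases le_total |x| |s|⁻¹ with hx | hx
  · rw [min_eq_left hx]
    nlinarith [Real.one_sub_sq_div_two_le_cos (x := x * s), sq_abs x, sq_nonneg (x * s)]
  · rw [min_eq_right hx, inv_pow, sq_abs, mul_assoc, mul_inv_cancel₀ (pow_ne_zero 2 hs)]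
    linarith [Real.neg_one_le_cos (x * s)]

theorem integral_one_sub_cos_mul_le (μ : Measure ℝ) [IsProbabilityMeasure μ] (s : ℝ) :
    ∫ x, (1 - Real.cos (x * s)) ∂μ ≤ 2 * s ^ 2 * ∫ x, min |x| |s|⁻¹ ^ 2 ∂μ := by
  rw [← integral_const_mul]
  refine integral_mono ((integrable_const 1).sub (integrable_cos_mul_const μ s)) ?_
    (one_sub_cos_mul_le · s)
  refine (Integrable.of_bound (by fun_prop) (|s|⁻¹ ^ 2) (ae_of_all _ fun x => ?_)).const_mul _
  rw [Real.norm_of_nonneg (sq_nonneg _)]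
  gcongr
  exact min_le_right _ _

theorem isLittleO_of_tendsto_mul_tail (μ : Measure ℝ) [IsProbabilityMeasure μ]
    (h : Tendsto (fun Λ => Λ * μ.real {x | Λ ≤ |x|}) atTop (𝓝 0)) :
    (fun s => ∫ x, (1 - Real.cos (x * s)) ∂μ) =o[𝓝[≠] 0] id := by
  set M : ℝ → ℝ := fun R => ∫ x, min |x| R ^ 2 ∂μ
  have hM : M =o[atTop] id := isLittleO_integral_min_sq μ measurable_abs (fun x => abs_nonneg x) h
  have h_inv : Tendsto (fun s : ℝ => |s|⁻¹) (𝓝[≠] 0) atTop :=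
    tendsto_inv_nhdsGT_zero.comp tendsto_abs_nhdsNE_zero
  have h_sq_inv : (fun s : ℝ => s ^ 2 * |s|⁻¹) =O[𝓝[≠] 0] id :=
    Asymptotics.isBigO_of_le _ fun s => by
      rcases eq_or_ne s 0 with rfl | hs <;> simp [sq, mul_assoc, *]
  have h_small : (fun s => s ^ 2 * M |s|⁻¹) =o[𝓝[≠] 0] id :=
    ((Asymptotics.isBigO_refl (fun s : ℝ => s ^ 2) _).mul_isLittleO
      (hM.comp_tendsto h_inv)).trans_isBigO h_sq_inv
  refine (Asymptotics.IsBigO.of_bound 2 (.of_forall fun s => ?_)).trans_isLittleO h_small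
  have h_nonneg : 0 ≤ ∫ x, (1 - Real.cos (x * s)) ∂μ :=
    integral_nonneg fun x => sub_nonneg.2 (Real.cos_le_one _)
  rw [Real.norm_of_nonneg h_nonneg, Real.norm_of_nonneg (by positivity), ← mul_assoc]
  exact integral_one_sub_cos_mul_le μ s

theorem stmt_6 (μ : Measure ℝ) [IsProbabilityMeasure μ] :
    Tendsto (fun s : ℝ => (1 / |s|) * ∫ l : ℝ, (1 - Real.cos (l * s)) ∂μ)
        (𝓝[≠] 0) (𝓝 0) ↔
      Tendsto (fun Λ : ℝ => Λ * (μ (Set.Ioo (-Λ) Λ)ᶜ).toReal) atTop (𝓝 0) := by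
  simp_rw [compl_Ioo_neg_eq_setOf_le_abs, ← measureReal_def]
  exact (tendsto_inv_abs_mul_iff_isLittleO _).trans
    ⟨tendsto_mul_tail_of_isLittleO μ, isLittleO_of_tendsto_mul_tail μ⟩
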